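/- Let a, b be nonnegative integers and c a positive integer. Then E(a,b,c,1,0) = M(a,b,c−1), i.e. the number of lozenge tilings of the (a,b,c)-hexagon with an even intrusion of length 1 at position 0 equals MacMahon's product for the (a,b,c−1)-hexagon. Equivalently, E(a,b,c,1,0) = M(a,b,c) · (c)_a / (b+c)_a. -/

import Mathlib

/-! Deleting the intrusive row and column by a Schur complement and applying Pascal's rule row by
row reduces `E(a,b,c+1,1,0)` to MacMahon's determinant `det (C(b+c, c-i+j))` of the
`(a,b,c)`-hexagon. After scaling row `i` by `(c+a-1-i)! (b+i)! / (b+c)!` its entries become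
`∏_{j<k<a} (c+k-i) · ∏_{k<j} (i+b-k)`, an instance of Krattenthaler's lemma
`det (∏_{j<k<n} (A k - X i) · ∏_{k<j} (X i - B k)) = det V(X) · ∏_{j<k<n} (A k - B j)`, proved by
column operations that strip one factor `A k - B j` at a time; at `X i = i` the Vandermonde
determinant is `∏_{i<a} i!`. The second formula is `M(a,b,c) / M(a,b,c-1) = (b+c)_a / (c)_a`. -/

open Finset

noncomputable section

/-- Binomial coefficient with integer arguments, equal to `0` whenever `k < 0` or `k > n`. -/
def ibinom (n k : ℤ) : ℚ :=
  if 0 ≤ k ∧ k ≤ n then (n.toNat.choose k.toNat : ℚ) else 0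

/-- The Pochhammer symbol (rising factorial) `x (x+1) ⋯ (x+n-1)`. -/
def poch (x : ℚ) (n : ℕ) : ℚ := (ascPochhammer ℚ n).eval x

/-- MacMahon's product `M(a,b,c)`. -/
def macmahon (a b c : ℕ) : ℚ :=
  ∏ i ∈ range a,
    ((Nat.factorial i : ℚ) * (Nat.factorial (b + c + i) : ℚ)) /
      ((Nat.factorial (b + i) : ℚ) * (Nat.factorial (c + i) : ℚ))

/-- The matrix `Q(a,b,c,d,p)` (with `1`-based indices `i, j ∈ {1, …, a+d}`):
rows/columns with index `≤ a` are lateral, the rest are intrusive. -/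
def Qmat (a b c d : ℕ) (p : ℤ) : Matrix (Fin (a + d)) (Fin (a + d)) ℚ :=
  Matrix.of fun i j =>
    if (i : ℕ) < a then
      if (j : ℕ) < a then
        ibinom ((b : ℤ) + c) ((c : ℤ) - (((i : ℕ) : ℤ) + 1) + (((j : ℕ) : ℤ) + 1))
      else
        ibinom (2 * (((j : ℕ) : ℤ) - a + 1) - 1)
          ((((j : ℕ) : ℤ) - a + 1) - (((i : ℕ) : ℤ) + 1) + p)
    else
      if (j : ℕ) < a then
        ibinom ((b : ℤ) + c - 2 * (((i : ℕ) : ℤ) - a + 1) + 1)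
          ((c : ℤ) - (((i : ℕ) : ℤ) - a + 1) + (((j : ℕ) : ℤ) + 1) - p)
      else
        ibinom (2 * (((j : ℕ) : ℤ) - ((i : ℕ) : ℤ))) (((j : ℕ) : ℤ) - ((i : ℕ) : ℤ))

/-- `E(a,b,c,d,p) = det Q(a,b,c,d,p)`, the signed count of lozenge tilings of the
`(a,b,c)`-hexagon with an even intrusion of length `d` at position `p`. -/
def E (a b c d : ℕ) (p : ℤ) : ℚ := (Qmat a b c d p).det

open Matrix
open scoped Nat

lemma prod_Ioo_eq_ite_mul {M : Type*} [CommMonoid M] (f : ℕ → M) (m n : ℕ) :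
    ∏ k ∈ Ioo m n, f k = (if m + 1 < n then f (m + 1) else 1) * ∏ k ∈ Ioo (m + 1) n, f k := by
  split_ifs with h
  · rw [← Ico_add_one_left_eq_Ioo, prod_eq_prod_Ico_succ_bot h, Ico_add_one_left_eq_Ioo]
  · rw [one_mul, show Ioo m n = ∅ by ext; simp; omega, show Ioo (m + 1) n = ∅ by ext; simp; omega]

lemma factorial_mul_descFactorial_comm {m n j k : ℕ} (h : n + j = m + k) :
    m ! * n.descFactorial k = n ! * m.descFactorial j := by
  by_cases hk : k ≤ n
  · have hsub : n - k = m - j := by omega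
    refine Nat.eq_of_mul_eq_mul_left (Nat.factorial_pos (n - k)) ?_
    rw [mul_left_comm, Nat.factorial_mul_descFactorial hk, hsub, mul_left_comm,
      Nat.factorial_mul_descFactorial (by omega), mul_comm]
  · rw [Nat.descFactorial_eq_zero_iff_lt.2 (by omega),
      Nat.descFactorial_eq_zero_iff_lt.2 (by omega), mul_zero, mul_zero]

lemma factorial_mul_prod_Ioo {R : Type*} [CommRing R] (m j a : ℕ) :
    (m ! : R) * ∏ k ∈ Ioo j a, ((m : R) + k - j) = (m + (a - 1 - j))! := by
  rw [← Ico_add_one_left_eq_Ioo, prod_Ico_eq_prod_range,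
    show a - (j + 1) = a - 1 - j by omega, ← Nat.factorial_mul_ascFactorial,
    Nat.ascFactorial_eq_prod_range]
  push_cast
  congr 1
  exact prod_congr rfl fun t _ => by ring

section Krattenthaler

variable {R : Type*} [CommRing R] {n : ℕ}

def subdiag (n : ℕ) (g : ℕ → R) : Matrix (Fin n) (Fin n) R :=
  of fun i j => if (i : ℕ) = j + 1 then g j else 0

lemma det_one_add_subdiag (g : ℕ → R) : (1 + subdiag n g).det = 1 := by
  rw [det_of_isLowerTriangular]
  · refine prod_eq_one fun i _ => ?_
    simp [subdiag]
  · intro i j hij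
    have hij : (i : ℕ) < j := hij
    simp [subdiag, one_apply, Fin.ne_of_lt hij, show (i : ℕ) ≠ j + 1 by omega]

lemma mul_subdiag_apply (M : Matrix (Fin n) (Fin n) R) (g : ℕ → R) (i j : Fin n) :
    (M * subdiag n g) i j = if h : (j : ℕ) + 1 < n then M i ⟨j + 1, h⟩ * g j else 0 := by
  rw [mul_apply]
  split_ifs with h
  · rw [Fintype.sum_eq_single ⟨j + 1, h⟩ fun k hk => ?_]
    · simp [subdiag]
    · simp [subdiag, show (k : ℕ) ≠ j + 1 from fun e => hk (Fin.ext e)]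
  · refine sum_eq_zero fun k _ => ?_
    simp [subdiag, show (k : ℕ) ≠ j + 1 by omega]

lemma subdiag_mul_apply (g : ℕ → R) (M : Matrix (Fin n) (Fin n) R) (i j : Fin n) :
    (subdiag n g * M) i j = if h : 0 < (i : ℕ) then g (i - 1) * M ⟨i - 1, by omega⟩ j else 0 := by
  rw [mul_apply]
  split_ifs with h
  · rw [Fintype.sum_eq_single ⟨i - 1, by omega⟩ fun k hk => ?_]
    · simp only [subdiag, of_apply, if_pos (show (i : ℕ) = i - 1 + 1 by omega)]
    · simp [subdiag, show (i : ℕ) ≠ k + 1 from fun e => hk (Fin.ext (by simp; omega))]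
  · refine sum_eq_zero fun k _ => ?_
    simp [subdiag, show (i : ℕ) ≠ k + 1 by omega]

/-- The matrix of Krattenthaler's determinant lemma, with the first `r` factors
`A (j + 1), …, A (j + r)` of column `j` removed. -/
def krattenthalerMatrix (X : Fin n → R) (A B : ℕ → R) (r : ℕ) : Matrix (Fin n) (Fin n) R :=
  of fun i j => (∏ k ∈ Ioo (j + r) n, (A k - X i)) * ∏ k ∈ range j, (X i - B k)

variable (X : Fin n → R) (A B : ℕ → R)

open Polynomial in
lemma det_krattenthalerMatrix_of_le {r : ℕ} (h : n ≤ r + 1) :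
    (krattenthalerMatrix X A B r).det = (vandermonde X).det := by
  cases subsingleton_or_nontrivial R
  · exact Subsingleton.elim _ _
  have hmonic (j : ℕ) : (∏ k ∈ range j, (Polynomial.X - C (B k))).Monic :=
    monic_prod_of_monic _ _ fun k _ => monic_X_sub_C (B k)
  rw [det_eval_matrixOfPolynomials_eq_det_vandermonde X
    (fun j => ∏ k ∈ range j, (Polynomial.X - C (B k))) (fun j => ?_) (fun j => hmonic j)]
  · congr 1
    ext i j
    have : Ioo ((j : ℕ) + r) n = ∅ := by ext; simp; omega
    simp [krattenthalerMatrix, this, eval_prod]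
  · rw [natDegree_prod_of_monic _ _ fun k _ => monic_X_sub_C (B k)]
    simp

lemma krattenthalerMatrix_mul_one_add_subdiag (r : ℕ) :
    krattenthalerMatrix X A B r * (1 + subdiag n fun j => if j + r + 1 < n then (1 : R) else 0) =
      krattenthalerMatrix X A B (r + 1) *
        diagonal fun j : Fin n => if (j : ℕ) + r + 1 < n then A (j + r + 1) - B j else 1 := by
  ext i j
  rw [Matrix.mul_add, Matrix.mul_one, Matrix.add_apply, mul_subdiag_apply, mul_diagonal]
  by_cases hj : (j : ℕ) + r + 1 < n
  · simp only [hj, dif_pos (show (j : ℕ) + 1 < n by omega), if_true, mul_one,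
      krattenthalerMatrix, of_apply]
    rw [prod_Ioo_eq_ite_mul _ (j + r), if_pos hj, show (j : ℕ) + 1 + r = j + r + 1 by omega,
      ← add_assoc, prod_range_succ]
    ring
  · have hempty (s : ℕ) (hs : r ≤ s) : Ioo ((j : ℕ) + s) n = ∅ := by ext; simp; omega
    simp [hj, krattenthalerMatrix, hempty r le_rfl, hempty (r + 1) (by omega)]

theorem det_krattenthalerMatrix {r : ℕ} (hr : r ≤ n) :
    (krattenthalerMatrix X A B r).det =
      (vandermonde X).det * ∏ j ∈ range n, ∏ k ∈ Ioo (j + r) n, (A k - B j) := by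
  induction hr using Nat.decreasingInduction with
  | self =>
    rw [det_krattenthalerMatrix_of_le X A B (by omega), prod_eq_one fun j _ => ?_, mul_one]
    rw [Ioo_eq_empty (by omega), prod_empty]
  | of_succ r hr ih =>
    have hdet := congrArg det (krattenthalerMatrix_mul_one_add_subdiag X A B r)
    rw [det_mul, det_mul, det_one_add_subdiag, mul_one, det_diagonal, ih,
      Fin.prod_univ_eq_prod_range (fun j => if j + r + 1 < n then A (j + r + 1) - B j else 1)]
      at hdet
    rw [hdet, mul_assoc, ← prod_mul_distrib]
    congr 1
    refine prod_congr rfl fun j _ => ?_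
    rw [prod_Ioo_eq_ite_mul _ (j + r), ← add_assoc, mul_comm]

end Krattenthaler

lemma ibinom_natCast (n k : ℕ) : ibinom n k = n.choose k := by
  unfold ibinom
  split_ifs with h
  · simp
  · rw [Nat.choose_eq_zero_of_lt (by omega), Nat.cast_zero]

lemma ibinom_of_neg (n : ℤ) {k : ℤ} (hk : k < 0) : ibinom n k = 0 :=
  if_neg (by omega)

lemma ibinom_succ_left (n : ℕ) (k : ℤ) :
    ibinom ((n : ℤ) + 1) k = ibinom n k + ibinom n (k - 1) := by
  rcases lt_or_ge k 0 with hk | hk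
  · simp only [ibinom_of_neg _ hk, ibinom_of_neg _ (show k - 1 < 0 by omega), add_zero]
  lift k to ℕ using hk
  rcases k with _ | m
  · rw [← Nat.cast_succ, ibinom_natCast, ibinom_natCast, ibinom_of_neg _ (by omega)]
    simp
  · rw [show ((m + 1 : ℕ) : ℤ) - 1 = m by push_cast; ring, ← Nat.cast_succ, ibinom_natCast,
      ibinom_natCast, ibinom_natCast, Nat.choose_succ_succ', Nat.cast_add, add_comm]

def macmahonMatrix (a b c : ℕ) : Matrix (Fin a) (Fin a) ℚ :=
  of fun i j => ibinom ((b : ℤ) + c) ((c : ℤ) + (j : ℕ) - (i : ℕ))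

lemma factorial_mul_macmahonMatrix_apply {a : ℕ} (b c : ℕ) (i j : Fin a) :
    ((c + (a - 1 - i))! * (b + i)! : ℚ) * macmahonMatrix a b c i j =
      (b + c)! *
        krattenthalerMatrix (fun i => (i : ℚ)) (fun k => c + k) (fun k => k - b) 0 i j := by
  have hfalling : ∏ k ∈ range j, ((i : ℚ) - ((k : ℚ) - b)) = (b + i).descFactorial j := by
    rw [Nat.descFactorial_eq_prod_range, ← prod_range_natCast_sub]
    push_cast
    exact prod_congr rfl fun k _ => by ring
  simp only [macmahonMatrix, krattenthalerMatrix, of_apply, add_zero, hfalling]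
  by_cases hij : (i : ℕ) ≤ c + j
  · obtain ⟨K, hK⟩ : ∃ K, c + j = i + K := ⟨c + j - i, by omega⟩
    have hKq : (c : ℚ) + j = i + K := by exact_mod_cast hK
    have hrising :
        ∏ k ∈ Ioo (j : ℕ) a, ((c : ℚ) + k - i) = ∏ k ∈ Ioo (j : ℕ) a, ((K : ℚ) + k - j) :=
      prod_congr rfl fun k _ => by linarith
    have key := congrArg (Nat.cast : ℕ → ℚ)
      (factorial_mul_descFactorial_comm (m := b + i) (n := b + c) (j := j) (k := K) (by omega))
    rw [Nat.descFactorial_eq_factorial_mul_choose] at key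
    push_cast at key
    rw [show (c : ℤ) + (j : ℕ) - (i : ℕ) = (K : ℤ) by omega,
      show (b : ℤ) + c = ((b + c : ℕ) : ℤ) by push_cast; ring, ibinom_natCast, hrising,
      show c + (a - 1 - i) = K + (a - 1 - j) by omega, ← factorial_mul_prod_Ioo]
    linear_combination (∏ k ∈ Ioo (j : ℕ) a, ((K : ℚ) + k - j)) * key
  -- for `c + j < i` both sides vanish, the right one through its factor `k = i - c`
  · have hzero : (c : ℚ) + ((i - c : ℕ) : ℚ) - i = 0 := by
      rw [Nat.cast_sub (by omega)]
      ring
    rw [ibinom_of_neg _ (by omega), prod_eq_zero (i := (i : ℕ) - c) (by simp; omega) hzero]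
    simp

lemma det_vandermonde_natCast (a : ℕ) :
    (vandermonde fun i : Fin a => (i : ℚ)).det = ∏ i ∈ range a, (i ! : ℚ) := by
  cases a with
  | zero => simp
  | succ n =>
    rw [det_vandermonde_id_eq_superFactorial, ← Nat.prod_range_succ_factorial]
    push_cast
    rfl

lemma prod_Ioo_add_sub_eq_div (x m j a : ℕ) :
    ∏ k ∈ Ioo j a, ((x : ℚ) + k - (j - m)) = (m + x + (a - 1 - j))! / (m + x)! := by
  rw [eq_div_iff (by positivity), mul_comm, ← factorial_mul_prod_Ioo]
  push_cast
  exact congrArg _ (prod_congr rfl fun k _ => by ring)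

theorem det_macmahonMatrix (a b c : ℕ) : (macmahonMatrix a b c).det = macmahon a b c := by
  have hrows : macmahonMatrix a b c = of fun i j : Fin a =>
      ((b + c)! / ((c + (a - 1 - i))! * (b + i)!) : ℚ) *
        krattenthalerMatrix (fun i => (i : ℚ)) (fun k => c + k) (fun k => k - b) 0 i j := by
    ext i j
    rw [of_apply, div_mul_eq_mul_div, eq_div_iff (by positivity), mul_comm,
      factorial_mul_macmahonMatrix_apply]
  have hscale : ∏ i : Fin a, ((b + c)! / ((c + (a - 1 - i))! * (b + i)!) : ℚ) =
      (∏ i ∈ range a, ((b + c)! : ℚ)) /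
        ((∏ i ∈ range a, ((c + i)! : ℚ)) * ∏ i ∈ range a, ((b + i)! : ℚ)) := by
    rw [Fin.prod_univ_eq_prod_range (fun i => ((b + c)! / ((c + (a - 1 - i))! * (b + i)!) : ℚ)),
      prod_div_distrib, prod_mul_distrib, prod_range_reflect (fun i => ((c + i)! : ℚ))]
  have hpairs : ∏ j ∈ range a, ∏ k ∈ Ioo (j + 0) a, ((c : ℚ) + k - (j - b)) =
      (∏ i ∈ range a, ((b + c + i)! : ℚ)) / ∏ i ∈ range a, ((b + c)! : ℚ) := by
    simp only [add_zero, prod_Ioo_add_sub_eq_div, prod_div_distrib]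
    rw [prod_range_reflect (fun i => ((b + c + i)! : ℚ))]
  rw [hrows, det_mul_column, det_krattenthalerMatrix _ _ _ (Nat.zero_le a), det_vandermonde_natCast,
    hscale, hpairs, macmahon, prod_div_distrib, prod_mul_distrib, prod_mul_distrib]
  have : ∏ i ∈ range a, ((b + c)! : ℚ) ≠ 0 := by positivity
  field_simp

def intrusiveCol (a : ℕ) : Matrix (Fin a) (Fin 1) ℚ :=
  of fun i _ => if (i : ℕ) = 0 then 1 else 0

/-- The intrusive row of `Qmat a b (c + 1) 1 0`: row `-1` of `macmahonMatrix a b c`. -/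
def intrusiveRow (a b c : ℕ) : Matrix (Fin 1) (Fin a) ℚ :=
  of fun _ j => ibinom ((b : ℤ) + c) ((c : ℤ) + 1 + (j : ℕ))

lemma Qmat_one_zero_submatrix_finSumFinEquiv (a b c : ℕ) :
    (Qmat a b (c + 1) 1 0).submatrix finSumFinEquiv finSumFinEquiv =
      fromBlocks (macmahonMatrix a b (c + 1)) (intrusiveCol a) (intrusiveRow a b c) 1 := by
  ext (i | i) (j | j)
  · simp only [Qmat, macmahonMatrix, submatrix_apply, finSumFinEquiv_apply_left,
      fromBlocks_apply₁₁, of_apply, Fin.val_castAdd, i.isLt, j.isLt, if_true]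
    congr 1
    push_cast
    ring
  · simp only [Qmat, intrusiveCol, submatrix_apply, finSumFinEquiv_apply_left,
      finSumFinEquiv_apply_right, fromBlocks_apply₁₂, of_apply, Fin.val_castAdd, Fin.val_natAdd,
      i.isLt, if_true, show ¬a + (j : ℕ) < a by omega, if_false]
    split_ifs with hi
    · simp [hi, Subsingleton.elim j 0, ibinom]
    · exact ibinom_of_neg _ (by omega)
  · simp [Qmat, intrusiveRow]
    congr 1 <;> ring
  · rw [Subsingleton.elim i j]
    simp [Qmat, ibinom]

lemma macmahonMatrix_succ_sub_eq (a b c : ℕ) :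
    macmahonMatrix a b (c + 1) - intrusiveCol a * intrusiveRow a b c =
      (1 + subdiag a 1) * macmahonMatrix a b c := by
  ext i j
  rw [Matrix.add_mul, Matrix.one_mul, Matrix.add_apply, subdiag_mul_apply, Matrix.sub_apply,
    mul_apply, Fin.sum_univ_one]
  simp only [macmahonMatrix, intrusiveCol, intrusiveRow, of_apply, Pi.one_apply, one_mul]
  rw [show (b : ℤ) + (c + 1 : ℕ) = (b + c : ℕ) + 1 by push_cast; ring, ibinom_succ_left]
  push_cast
  by_cases hi : (i : ℕ) = 0
  · simp only [hi, if_true, lt_irrefl, dif_neg, not_false_eq_true]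
    ring_nf
  · rw [if_neg hi, dif_pos (by omega), Nat.cast_sub (by omega)]
    ring_nf

lemma E_one_zero_eq_det_macmahonMatrix (a b c : ℕ) :
    E a b (c + 1) 1 0 = (macmahonMatrix a b c).det := by
  rw [E, ← det_submatrix_equiv_self finSumFinEquiv, Qmat_one_zero_submatrix_finSumFinEquiv,
    det_fromBlocks_one₂₂,
    macmahonMatrix_succ_sub_eq, det_mul, det_one_add_subdiag, one_mul]

lemma poch_eq_prod (x : ℚ) (n : ℕ) : poch x n = ∏ i ∈ range n, (x + i) := by
  induction n with
  | zero => simp [poch]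
  | succ n ih => rw [poch, ascPochhammer_succ_eval, ← poch, ih, prod_range_succ]

lemma macmahon_succ_mul_poch (a b c : ℕ) :
    macmahon a b (c + 1) * poch (c + 1) a = macmahon a b c * poch (b + c + 1) a := by
  rw [macmahon, macmahon, poch_eq_prod, poch_eq_prod, ← prod_mul_distrib, ← prod_mul_distrib]
  refine prod_congr rfl fun i _ => ?_
  rw [show b + (c + 1) + i = b + c + i + 1 by ring, show c + 1 + i = c + i + 1 by ring,
    Nat.factorial_succ, Nat.factorial_succ]
  push_cast
  field_simp
  ring

/-- With an even intrusion of length `1` at position `0`, the count equals MacMahon's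
product for the `(a,b,c-1)`-hexagon. -/
theorem E_d_one_p_zero (a b c : ℕ) (hc : 0 < c) :
    E a b c 1 0 = macmahon a b (c - 1) ∧
    E a b c 1 0 = macmahon a b c * poch (c : ℚ) a / poch ((b : ℚ) + c) a := by
  obtain ⟨c, rfl⟩ : ∃ c', c = c' + 1 := ⟨c - 1, by omega⟩
  have hE : E a b (c + 1) 1 0 = macmahon a b c := by
    rw [E_one_zero_eq_det_macmahonMatrix, det_macmahonMatrix]
  refine ⟨by rw [hE, Nat.add_sub_cancel], ?_⟩
  rw [hE, eq_div_iff (ascPochhammer_pos a _ (by positivity)).ne', Nat.cast_succ, ← add_assoc,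
    macmahon_succ_mul_poch]
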